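/- Let Γ be a simple directed graph without oriented cycles and at most one edge between vertices. If Γ contains no oriented cycles at all on any subset of vertices (i.e., Γ is acyclic), then the number of idempotents of HK_Γ is 2^n where n = |V(Γ)|. -/

import Mathlib

/-- One-step Hecke-Kiselman edge relations for a directed graph with edge relation `E`. -/
def HKRel {V : Type*} (E : V → V → Prop) : FreeMonoid V → FreeMonoid V → Prop := fun a b =>
  (∃ x : V, a = FreeMonoid.of x * FreeMonoid.of x ∧ b = FreeMonoid.of x) ∨
  (∃ x y : V, x ≠ y ∧ ¬ E x y ∧ ¬ E y x ∧
    a = FreeMonoid.of x * FreeMonoid.of y ∧ b = FreeMonoid.of y * FreeMonoid.of x) ∨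
  (∃ x y : V, E x y ∧ ¬ E y x ∧
    a = FreeMonoid.of x * FreeMonoid.of y * FreeMonoid.of x ∧
    b = FreeMonoid.of y * FreeMonoid.of x * FreeMonoid.of y) ∨
  (∃ x y : V, E x y ∧ ¬ E y x ∧
    a = FreeMonoid.of x * FreeMonoid.of y * FreeMonoid.of x ∧
    b = FreeMonoid.of x * FreeMonoid.of y) ∨
  (∃ x y : V, E x y ∧ E y x ∧
    a = FreeMonoid.of x * FreeMonoid.of y * FreeMonoid.of x ∧
    b = FreeMonoid.of y * FreeMonoid.of x * FreeMonoid.of y)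

/-- The congruence on the free monoid generated by the Hecke-Kiselman relations. -/
def HKCon {V : Type*} (E : V → V → Prop) : Con (FreeMonoid V) := conGen (HKRel E)

/-- The Hecke-Kiselman monoid of the directed graph `(V, E)`. -/
def HK {V : Type*} (E : V → V → Prop) := (HKCon E).Quotient

instance {V : Type*} (E : V → V → Prop) : Monoid (HK E) :=
  inferInstanceAs (Monoid (HKCon E).Quotient)

/-- The canonical quotient map. -/
def HKmk {V : Type*} (E : V → V → Prop) : FreeMonoid V →* HK E := (HKCon E).mk'

/-- The content of an element: vertices occurring in some representing word. -/
def elemContent {V : Type*} (E : V → V → Prop) (x : HK E) : Set V :=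
  {v | ∃ w : FreeMonoid V, HKmk E w = x ∧ v ∈ FreeMonoid.toList w}

/-!
List a set `S` of vertices of the acyclic graph in topological order `s₁ ⋯ sₖ` (edges only go
forward) and put `e_S = s₁ ⋯ sₖ`. By `xyx = xy = yxy` along an edge `x → y` and commutation of
non-adjacent generators, every `z ∈ S` is absorbed by `e_S` on both sides, so `e_S` is an
idempotent with content `S`. Conversely, let `w` be a word with content `S` and `a` a sink of `S`.
All occurrences of `a` in `w` merge into one, `w = p a q`, and `(p a q)ⁿ⁺¹ = p (q p)ⁿ a q` because
`a` absorbs from the left everything standing before its last occurrence; induction on `|S|` then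
gives `w ^ (|S| + 1) = e_S`. So an idempotent is determined by its content, and the idempotents
correspond to the `2ⁿ` subsets of `V`.
-/

section Absorption

variable {M : Type*} [Monoid M] {a : M}

theorem mul_prod_mul_eq_prod_mul (ha : IsIdempotentElem a) (l : List M)
    (h : ∀ z ∈ l, a * z * a = z * a) : a * l.prod * a = l.prod * a := by
  induction l using List.reverseRecOn with
  | nil => simpa using ha.eq
  | append_singleton l z ih =>
    have hl := ih fun x hx => h x (by simp [hx])
    have hz := h z (by simp)
    simp only [List.prod_append, List.prod_singleton, ← mul_assoc] at hl ⊢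
    calc a * l.prod * z * a = a * l.prod * (a * z * a) := by rw [hz]; simp only [mul_assoc]
      _ = a * l.prod * a * z * a := by simp only [mul_assoc]
      _ = l.prod * (a * z * a) := by rw [hl]; simp only [mul_assoc]
      _ = l.prod * z * a := by rw [hz, mul_assoc]

theorem mul_prod_mul_eq_mul_prod (ha : IsIdempotentElem a) (l : List M)
    (h : ∀ z ∈ l, a * z * a = a * z) : a * l.prod * a = a * l.prod := by
  induction l with
  | nil => simpa using ha.eq
  | cons z l ih =>
    have hl := ih fun x hx => h x (by simp [hx])
    have hz := h z (by simp)
    simp only [List.prod_cons, ← mul_assoc] at hl ⊢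
    calc a * z * l.prod * a = a * z * a * l.prod * a := by rw [hz]
      _ = a * z * (a * l.prod * a) := by simp only [mul_assoc]
      _ = a * z * a * l.prod := by rw [hl]; simp only [mul_assoc]
      _ = a * z * l.prod := by rw [hz]

theorem pow_succ_mul_mul_eq {p q : M} (h : a * (q * p) * a = q * p * a) (n : ℕ) :
    (p * a * q) ^ (n + 1) = p * (q * p) ^ n * (a * q) := by
  induction n with
  | zero => simp [mul_assoc]
  | succ n ih =>
    rw [pow_succ, ih]
    calc p * (q * p) ^ n * (a * q) * (p * a * q)
        = p * (q * p) ^ n * (a * (q * p) * a) * q := by simp only [mul_assoc]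
      _ = p * (q * p) ^ (n + 1) * (a * q) := by rw [h]; simp only [pow_succ, mul_assoc]

end Absorption

namespace HK

variable {V : Type*} {E : V → V → Prop}

variable (E) in
def gen (x : V) : HK E := HKmk E (FreeMonoid.of x)

variable (E) in
def ofList (l : List V) : HK E := (l.map (gen E)).prod

@[simp] theorem ofList_nil : ofList E [] = 1 := rfl

@[simp] theorem ofList_cons (x : V) (l : List V) :
    ofList E (x :: l) = gen E x * ofList E l := by
  simp [ofList]

@[simp] theorem ofList_append (l₁ l₂ : List V) :
    ofList E (l₁ ++ l₂) = ofList E l₁ * ofList E l₂ := by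
  simp [ofList]

theorem HKmk_ofList (l : List V) : HKmk E (FreeMonoid.ofList l) = ofList E l := by
  induction l with
  | nil => simp
  | cons x l ih => rw [FreeMonoid.ofList_cons, map_mul, ih, ofList_cons, gen]

theorem exists_ofList_eq (x : HK E) : ∃ l, ofList E l = x := by
  obtain ⟨w, rfl⟩ := (HKCon E).mk'_surjective x
  exact ⟨w.toList, (HKmk_ofList _).symm⟩

theorem HKmk_eq_of_rel {u v : FreeMonoid V} (h : HKRel E u v) : HKmk E u = HKmk E v :=
  (Con.eq _).mpr (ConGen.Rel.of _ _ h)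

theorem gen_mul_self (x : V) : gen E x * gen E x = gen E x :=
  HKmk_eq_of_rel (Or.inl ⟨x, rfl, rfl⟩)

theorem gen_comm {x y : V} (hxy : x ≠ y) (h₁ : ¬ E x y) (h₂ : ¬ E y x) :
    gen E x * gen E y = gen E y * gen E x :=
  HKmk_eq_of_rel (Or.inr (Or.inl ⟨x, y, hxy, h₁, h₂, rfl, rfl⟩))

theorem gen_mul_gen_mul_gen_of_edge {x y : V} (h₁ : E x y) (h₂ : ¬ E y x) :
    gen E x * gen E y * gen E x = gen E x * gen E y :=
  HKmk_eq_of_rel (Or.inr (Or.inr (Or.inr (Or.inl ⟨x, y, h₁, h₂, rfl, rfl⟩))))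

theorem gen_braid_of_edge {x y : V} (h₁ : E x y) (h₂ : ¬ E y x) :
    gen E x * gen E y * gen E x = gen E y * gen E x * gen E y :=
  HKmk_eq_of_rel (Or.inr (Or.inr (Or.inl ⟨x, y, h₁, h₂, rfl, rfl⟩)))

theorem gen_mul_gen_mul_gen_of_not_edge_from {a z : V} (h : ¬ E a z) :
    gen E a * gen E z * gen E a = gen E z * gen E a := by
  by_cases hza : z = a
  · rw [hza, gen_mul_self, gen_mul_self]
  by_cases hE : E z a
  · rw [← gen_braid_of_edge hE h, gen_mul_gen_mul_gen_of_edge hE h]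
  · rw [gen_comm (Ne.symm hza) h hE, mul_assoc, gen_mul_self]

theorem gen_mul_gen_mul_gen_of_not_edge_to {a z : V} (h : ¬ E z a) :
    gen E a * gen E z * gen E a = gen E a * gen E z := by
  by_cases hza : z = a
  · rw [hza, gen_mul_self, gen_mul_self]
  by_cases hE : E a z
  · exact gen_mul_gen_mul_gen_of_edge hE h
  · rw [mul_assoc, ← gen_comm (Ne.symm hza) hE h, ← mul_assoc, gen_mul_self]

theorem gen_mul_ofList_mul_gen_of_sink {a : V} {u : List V} (h : ∀ x ∈ u, ¬ E a x) :
    gen E a * ofList E u * gen E a = ofList E u * gen E a :=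
  mul_prod_mul_eq_prod_mul (gen_mul_self a) _ <| by
    simpa using fun x hx => gen_mul_gen_mul_gen_of_not_edge_from (h x hx)

theorem gen_mul_ofList_mul_gen_of_source {a : V} {u : List V} (h : ∀ x ∈ u, ¬ E x a) :
    gen E a * ofList E u * gen E a = gen E a * ofList E u :=
  mul_prod_mul_eq_mul_prod (gen_mul_self a) _ <| by
    simpa using fun x hx => gen_mul_gen_mul_gen_of_not_edge_to (h x hx)

theorem gen_mul_ofList_eq_right {l : List V} (hl : l.Pairwise fun x y => ¬ E y x) {z : V}
    (hz : z ∈ l) : gen E z * ofList E l = ofList E l := by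
  obtain ⟨p, q, rfl⟩ := List.append_of_mem hz
  have hsink : ∀ x ∈ p, ¬ E z x := fun x hx => (List.pairwise_append.mp hl).2.2 x hx z (by simp)
  simp only [ofList_append, ofList_cons, ← mul_assoc]
  rw [gen_mul_ofList_mul_gen_of_sink hsink]

theorem ofList_mul_gen_eq_left {l : List V} (hl : l.Pairwise fun x y => ¬ E y x) {z : V}
    (hz : z ∈ l) : ofList E l * gen E z = ofList E l := by
  obtain ⟨p, q, rfl⟩ := List.append_of_mem hz
  have hsource : ∀ y ∈ q, ¬ E y z := (List.pairwise_cons.mp (List.pairwise_append.mp hl).2.1).1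
  simp only [ofList_append, ofList_cons, mul_assoc]
  rw [← mul_assoc (gen E z) (ofList E q), gen_mul_ofList_mul_gen_of_source hsource]

theorem ofList_mul_ofList_eq_right_of_subset {l v : List V}
    (hl : l.Pairwise fun x y => ¬ E y x) (hv : v ⊆ l) : ofList E v * ofList E l = ofList E l := by
  induction v with
  | nil => simp
  | cons z v ih =>
    rw [ofList_cons, mul_assoc, ih (List.subset_of_cons_subset hv),
      gen_mul_ofList_eq_right hl (hv List.mem_cons_self)]

theorem ofList_mul_ofList_eq_left_of_subset {l v : List V}
    (hl : l.Pairwise fun x y => ¬ E y x) (hv : v ⊆ l) : ofList E l * ofList E v = ofList E l := by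
  induction v using List.reverseRecOn with
  | nil => simp
  | append_singleton v z ih =>
    rw [ofList_append, ← mul_assoc, ih (fun x hx => hv (by simp [hx])), ofList_cons, ofList_nil,
      mul_one, ofList_mul_gen_eq_left hl (hv (by simp))]

theorem isIdempotentElem_ofList {l : List V} (hl : l.Pairwise fun x y => ¬ E y x) :
    IsIdempotentElem (ofList E l) :=
  ofList_mul_ofList_eq_right_of_subset hl (List.Subset.refl l)

/-- All occurrences of the sink `a` in `w` merge into a single one. -/
theorem exists_ofList_eq_mul_gen_mul {a : V} {w : List V} (ha : a ∈ w)
    (hsink : ∀ x ∈ w, x ≠ a → ¬ E a x) :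
    ∃ p q : List V, (∀ x, x ∈ q ++ p ↔ x ∈ w ∧ x ≠ a) ∧
      ofList E w = ofList E p * gen E a * ofList E q := by
  induction w with
  | nil => simp at ha
  | cons z w ih =>
    by_cases haw : a ∈ w
    · obtain ⟨p, q, hmem, heq⟩ := ih haw fun x hx => hsink x (List.mem_cons_of_mem z hx)
      by_cases hza : z = a
      · subst hza
        refine ⟨p, q, fun x => by simp only [hmem, List.mem_cons]; grind, ?_⟩
        have hp : ∀ x ∈ p, ¬ E z x := fun x hx =>
          have hx' := (hmem x).mp (List.mem_append_right q hx)
          hsink x (List.mem_cons_of_mem z hx'.1) hx'.2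
        rw [ofList_cons, heq, ← mul_assoc, ← mul_assoc, gen_mul_ofList_mul_gen_of_sink hp]
      · refine ⟨z :: p, q, fun x => ?_, by rw [ofList_cons, heq, ofList_cons]; simp only [mul_assoc]⟩
        have := hmem x
        simp only [List.mem_append, List.mem_cons] at this ⊢
        grind
    · have hza : a = z := by simpa [haw] using ha
      subst hza
      exact ⟨[], w, fun x => by simp only [List.append_nil, List.mem_cons]; grind, by simp⟩

theorem ofList_pow_length_succ {l w : List V} (hnd : l.Nodup)
    (hl : l.Pairwise fun x y => ¬ E y x) (hw : ∀ x, x ∈ w ↔ x ∈ l) :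
    ofList E w ^ (l.length + 1) = ofList E l := by
  induction l using List.reverseRecOn generalizing w with
  | nil => simp [List.eq_nil_iff_forall_not_mem.mpr fun x => by simpa using hw x]
  | append_singleton l a ih =>
    obtain ⟨hal, hnd'⟩ := (List.nodup_concat l a).mp (by rwa [List.concat_eq_append])
    have hl' := (List.pairwise_append.mp hl).1
    have hsink : ∀ x ∈ w, x ≠ a → ¬ E a x := fun x hx hxa =>
      (List.pairwise_append.mp hl).2.2 x (by simpa [hxa] using (hw x).mp hx) a (by simp)
    obtain ⟨p, q, hmem, heq⟩ := exists_ofList_eq_mul_gen_mul ((hw a).mpr (by simp)) hsink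
    have hqp : ∀ x, x ∈ q ++ p ↔ x ∈ l := fun x => by
      rw [hmem, hw]; simp only [List.mem_append, List.mem_singleton]; grind
    have habsorb :
        gen E a * (ofList E q * ofList E p) * gen E a = ofList E q * ofList E p * gen E a := by
      rw [← ofList_append]
      exact gen_mul_ofList_mul_gen_of_sink fun x hx => hsink x ((hmem x).mp hx).1 ((hmem x).mp hx).2
    calc ofList E w ^ ((l ++ [a]).length + 1)
        = ofList E p * (ofList E q * ofList E p) ^ (l.length + 1) * (gen E a * ofList E q) := by
          rw [heq, ← pow_succ_mul_mul_eq habsorb]; simp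
      _ = ofList E p * ofList E l * (gen E a * ofList E q) := by
          rw [← ofList_append, ih hnd' hl' hqp]
      _ = ofList E (l ++ [a]) * ofList E q := by
          rw [ofList_mul_ofList_eq_right_of_subset hl' fun x hx => (hqp x).mp (by simp [hx])]
          simp [mul_assoc]
      _ = ofList E (l ++ [a]) := ofList_mul_ofList_eq_left_of_subset hl fun x hx =>
          List.mem_append_left _ ((hqp x).mp (List.mem_append_left p hx))

section Content

variable [DecidableEq V]

variable (V) in
def sameLetters : Con (FreeMonoid V) where
  r u v := u.toList.toFinset = v.toList.toFinset
  iseqv := ⟨fun _ => rfl, Eq.symm, Eq.trans⟩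
  mul' h₁ h₂ := by simp only [FreeMonoid.toList_mul, List.toFinset_append, h₁, h₂]

theorem HKCon_le_sameLetters : HKCon E ≤ sameLetters V := by
  refine Con.conGen_le.mpr ?_
  rintro u v (⟨x, rfl, rfl⟩ | ⟨x, y, -, -, -, rfl, rfl⟩ | ⟨x, y, -, -, rfl, rfl⟩ |
    ⟨x, y, -, -, rfl, rfl⟩ | ⟨x, y, -, -, rfl, rfl⟩) <;>
  · ext
    simp only [FreeMonoid.toList_mul, FreeMonoid.toList_of, List.toFinset_append,
      List.toFinset_cons, List.toFinset_nil, Finset.mem_union, Finset.mem_insert]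
    tauto

def content (x : HK E) : Finset V :=
  Con.liftOn x (fun w => w.toList.toFinset) fun _ _ h => HKCon_le_sameLetters h

theorem content_ofList (l : List V) : (ofList E l).content = l.toFinset := by
  rw [← HKmk_ofList]
  rfl

theorem eq_ofList_of_isIdempotentElem {e : HK E} (he : IsIdempotentElem e) {l : List V}
    (hnd : l.Nodup) (hl : l.Pairwise fun x y => ¬ E y x) (hc : e.content = l.toFinset) :
    e = ofList E l := by
  obtain ⟨w, rfl⟩ := exists_ofList_eq e
  rw [← he.pow_succ_eq l.length]
  refine ofList_pow_length_succ hnd hl fun x => ?_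
  rw [← List.mem_toFinset, ← content_ofList, hc, List.mem_toFinset]

end Content

end HK

theorem exists_sink_of_acyclic {V : Type*} [Finite V] {E : V → V → Prop}
    (h : ∀ x, ¬ Relation.TransGen E x x) {S : Finset V} (hS : S.Nonempty) :
    ∃ a ∈ S, ∀ z ∈ S, ¬ E a z := by
  have : IsTrans V (flip (Relation.TransGen E)) := ⟨fun _ _ _ h₁ h₂ => h₂.trans h₁⟩
  have : Std.Irrefl (flip (Relation.TransGen E)) := ⟨h⟩
  obtain ⟨a, haS, hmin⟩ :=
    (Finite.wellFounded_of_trans_of_irrefl (flip (Relation.TransGen E))).has_min (S : Set V) hS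
  exact ⟨a, haS, fun z hz hE => hmin z hz (.single hE)⟩

theorem exists_nodup_pairwise_toFinset_eq_of_acyclic {V : Type*} [Finite V] [DecidableEq V]
    {E : V → V → Prop} (h : ∀ x, ¬ Relation.TransGen E x x) (S : Finset V) :
    ∃ l : List V, l.Nodup ∧ l.Pairwise (fun x y => ¬ E y x) ∧ l.toFinset = S := by
  induction S using Finset.strongInduction with
  | H S ih =>
    rcases S.eq_empty_or_nonempty with rfl | hS
    · exact ⟨[], List.nodup_nil, List.Pairwise.nil, rfl⟩
    obtain ⟨a, haS, hsink⟩ := exists_sink_of_acyclic h hS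
    obtain ⟨l, hnd, hl, hlS⟩ := ih _ (Finset.erase_ssubset haS)
    have hal : a ∉ l := by simp [← List.mem_toFinset, hlS]
    refine ⟨l ++ [a], ?_, ?_, ?_⟩
    · rw [← List.concat_eq_append, List.nodup_concat]
      exact ⟨hal, hnd⟩
    · refine List.pairwise_append.mpr ⟨hl, List.pairwise_singleton _ _, fun x hx y hy => ?_⟩
      rw [List.mem_singleton.mp hy]
      exact hsink x (Finset.mem_of_mem_erase (hlS ▸ List.mem_toFinset.mpr hx))
    · rw [List.toFinset_append, hlS, List.toFinset_cons, List.toFinset_nil, insert_empty_eq,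
        Finset.erase_union_eq a S haS]

theorem hk_acyclic_idempotent_count_general {V : Type*} [Fintype V] (E : V → V → Prop)
    (hacyclic : ∀ x : V, ¬ Relation.TransGen E x x) :
    Nat.card {a : HK E // a * a = a} = 2 ^ Fintype.card V := by
  classical
  choose l hnd hl hS using exists_nodup_pairwise_toFinset_eq_of_acyclic hacyclic
  have eq_ofList (e : {a : HK E // a * a = a}) : e.1 = HK.ofList E (l e.1.content) :=
    HK.eq_ofList_of_isIdempotentElem e.2 (hnd _) (hl _) (hS _).symm
  have hbij : Function.Bijective fun e : {a : HK E // a * a = a} => e.1.content := by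
    refine ⟨fun e₁ e₂ h => Subtype.ext ?_, fun S => ?_⟩
    · rw [eq_ofList e₁, eq_ofList e₂, show e₁.1.content = e₂.1.content from h]
    · refine ⟨⟨HK.ofList E (l S), (HK.isIdempotentElem_ofList (hl S)).eq⟩, ?_⟩
      dsimp only
      rw [HK.content_ofList, hS]
  rw [Nat.card_eq_of_bijective _ hbij, Nat.card_eq_fintype_card, Fintype.card_finset]

/-- If the finite graph `Γ` is acyclic (no oriented cycles at all), then the Hecke-Kiselman
monoid of `Γ` has exactly `2^n` idempotents, where `n` is the number of vertices. -/
theorem hk_acyclic_idempotent_count {V : Type*} [Fintype V] (E : V → V → Prop)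
    (hbidir : ∀ x y, ¬ (E x y ∧ E y x)) (hloop : ∀ x, ¬ E x x)
    (hacyclic : ∀ x : V, ¬ Relation.TransGen E x x) :
    Nat.card {a : HK E // a * a = a} = 2 ^ Fintype.card V :=
  hk_acyclic_idempotent_count_general E hacyclic
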